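/- Fix λ > 0 and define k̂ := Σ_{k=1}^{K_λ} 1{d_k²(PY) ≥ λ σ̂_k²}. Then (a) k̂ = max{0 ≤ k ≤ K_λ : d_j²(PY) ≥ λ σ̂_j² for all 1 ≤ j ≤ k} (with the maximum of the empty set equal to 0); (b) k̂ minimizes σ̂_k² over {0, 1, …, K_λ}; and (c) the map k ↦ σ̂_k² is nonincreasing on {0, …, k̂} and nondecreasing on {k̂, …, K_λ}. -/

import Mathlib

open scoped BigOperators NNReal ENNReal
open Classical MeasureTheory ProbabilityTheory

noncomputable section

/-- Squared Frobenius (Hilbert–Schmidt) norm of a real matrix. -/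
def frob2 {n m : ℕ} (M : Matrix (Fin n) (Fin m) ℝ) : ℝ :=
  ∑ i, ∑ j, (M i j) ^ 2

/-- `sval M k` is the `k`-th largest singular value of `M` (1-based indexing),
i.e. the square root of the `k`-th largest eigenvalue of `Mᴴ * M`; by convention
it is `0` for `k = 0` and for `k > m`. -/
def sval {n m : ℕ} (M : Matrix (Fin n) (Fin m) ℝ) (k : ℕ) : ℝ :=
  if h : 1 ≤ k ∧ k ≤ m then
    Real.sqrt ((show (M.transpose * M).IsHermitian by
      simpa [Matrix.conjTranspose_eq_transpose_of_trivial] using Matrix.isHermitian_conjTranspose_mul_self M).eigenvalues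
      (Tuple.sort (show (M.transpose * M).IsHermitian by
      simpa [Matrix.conjTranspose_eq_transpose_of_trivial] using Matrix.isHermitian_conjTranspose_mul_self M).eigenvalues ⟨m - k, by omega⟩))
  else 0

/-- A best rank-`k` approximation of `M` in Frobenius norm (rank-`k` truncated SVD),
with the convention that the rank-`0` truncation is `0`. -/
def trunc {n m : ℕ} (M : Matrix (Fin n) (Fin m) ℝ) (k : ℕ) :
    Matrix (Fin n) (Fin m) ℝ :=
  if k = 0 then 0
  else Classical.epsilon fun B : Matrix (Fin n) (Fin m) ℝ =>
    B.rank ≤ k ∧ ∀ C : Matrix (Fin n) (Fin m) ℝ, C.rank ≤ k → frob2 (M - B) ≤ frob2 (M - C)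

/-- `K_λ = ⌊(nm-1)/λ⌋ ∧ q ∧ m`. -/
def Kfun (n m q : ℕ) (lam : ℝ) : ℕ :=
  min (min (Nat.floor ((((n * m : ℕ) : ℝ) - 1) / lam)) q) m

/-- `σ̂_k² = ‖Y - (PY)_k‖² / (nm - λ k)`. -/
def sighat2 {n m : ℕ} (Y : Matrix (Fin n) (Fin m) ℝ)
    (P : Matrix (Fin n) (Fin n) ℝ) (lam : ℝ) (k : ℕ) : ℝ :=
  frob2 (Y - trunc (P * Y) k) / (((n * m : ℕ) : ℝ) - lam * k)

/-- The selected rank `k̂ = ∑_{k=1}^{K_λ} 1{d_k²(PY) ≥ λ σ̂_k²}`,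
which minimizes `σ̂_k²` over `{0, 1, …, K_λ}`. -/
def khat {n m : ℕ} (Y : Matrix (Fin n) (Fin m) ℝ)
    (P : Matrix (Fin n) (Fin n) ℝ) (q : ℕ) (lam : ℝ) : ℕ :=
  ∑ k ∈ Finset.Icc 1 (Kfun n m q lam),
    if lam * sighat2 Y P lam k ≤ (sval (P * Y) k) ^ 2 then 1 else 0

/-!
By the Eckart–Young theorem, `‖M - (M)_k‖² = ∑_{j > k} d_j²(M)`: the lower bound comes from the
Ky Fan inequality applied to an orthonormal basis of the kernel of a rank-`k` competitor, and
truncating the spectral decomposition of `Mᵀ M` attains it. Since `(PY)_k` lies in the range of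
`P`, Pythagoras gives `‖Y - (PY)_k‖² = ‖Y - PY‖² + ∑_{j > k} d_j²(PY)`, so the residuals satisfy
`R_{k-1} = R_k + d_k²` and `σ̂²_{k-1} = (R_k + d_k²) / ((nm - λk) + λ)` is the mediant of `σ̂²_k`
and `d_k² / λ`. Hence `σ̂²_k ≤ σ̂²_{k-1}` exactly when `λ σ̂²_k ≤ d_k²`, and, the `d_k` being
nonincreasing, the same mediant computation shows that this criterion at `k` forces it at every
`j ≤ k`. The indicators summed in `k̂` thus form an initial block of ones, which gives (a), and
`σ̂²` decreases up to `k̂` and increases after it, which gives (b) and (c).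
-/

open Matrix Module

section Frobenius

variable {n m t : ℕ}

lemma frob2_eq_trace (A : Matrix (Fin n) (Fin m) ℝ) : frob2 A = (Aᵀ * A).trace := by
  simp only [frob2, trace, diag, mul_apply, transpose_apply, sq]
  exact Finset.sum_comm

lemma frob2_nonneg (A : Matrix (Fin n) (Fin m) ℝ) : 0 ≤ frob2 A := by
  unfold frob2; positivity

lemma frob2_eq_zero_iff {A : Matrix (Fin n) (Fin m) ℝ} : frob2 A = 0 ↔ A = 0 := by
  rw [frob2, Fintype.sum_eq_zero_iff_of_nonneg fun i => by positivity]
  simp only [funext_iff, Fintype.sum_eq_zero_iff_of_nonneg fun i => sq_nonneg _, Pi.zero_apply,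
    sq_eq_zero_iff, ← Matrix.ext_iff]
  rfl

lemma frob2_add_of_trace_eq_zero {U V : Matrix (Fin n) (Fin m) ℝ} (h : (Uᵀ * V).trace = 0) :
    frob2 (U + V) = frob2 U + frob2 V := by
  have h' : (Vᵀ * U).trace = 0 := by rw [← trace_transpose, transpose_mul, transpose_transpose, h]
  simp only [frob2_eq_trace, transpose_add, Matrix.add_mul, Matrix.mul_add, trace_add, h, h']
  ring

lemma frob2_mul_le_of_isometry (A : Matrix (Fin n) (Fin m) ℝ) {W : Matrix (Fin m) (Fin t) ℝ}
    (hW : Wᵀ * W = 1) : frob2 (A * W) ≤ frob2 A := by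
  have hcompl : (1 - W * Wᵀ) * W = 0 := by
    rw [Matrix.sub_mul, Matrix.mul_assoc, hW, Matrix.mul_one, Matrix.one_mul, sub_self]
  have hcross : ((A * W * Wᵀ)ᵀ * (A * (1 - W * Wᵀ))).trace = 0 := by
    rw [transpose_mul, transpose_transpose, transpose_mul, ← Matrix.mul_assoc, trace_mul_comm,
      Matrix.mul_assoc, Matrix.mul_assoc, ← Matrix.mul_assoc _ W, hcompl]
    simp
  have hsplit := frob2_add_of_trace_eq_zero hcross
  rw [Matrix.mul_assoc, ← Matrix.mul_add, add_sub_cancel, Matrix.mul_one] at hsplit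
  have hproj : frob2 (A * (W * Wᵀ)) = frob2 (A * W) := by
    simp only [frob2_eq_trace, transpose_mul, transpose_transpose, Matrix.mul_assoc]
    rw [trace_mul_comm]
    simp only [Matrix.mul_assoc, hW, Matrix.mul_one]
  linarith [frob2_nonneg (A * (1 - W * Wᵀ))]

end Frobenius

namespace Matrix.IsHermitian

variable {m : ℕ} {S : Matrix (Fin m) (Fin m) ℝ}

def sortedEigenvalues (hS : S.IsHermitian) : Fin m → ℝ :=
  hS.eigenvalues ∘ Tuple.sort hS.eigenvalues

lemma monotone_sortedEigenvalues (hS : S.IsHermitian) : Monotone hS.sortedEigenvalues :=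
  Tuple.monotone_sort _

lemma exists_orthogonal_diagonalization_sorted (hS : S.IsHermitian) :
    ∃ V : Matrix (Fin m) (Fin m) ℝ, Vᵀ * V = 1 ∧ V * Vᵀ = 1 ∧
      S = V * diagonal hS.sortedEigenvalues * Vᵀ := by
  set U : Matrix (Fin m) (Fin m) ℝ := (hS.eigenvectorUnitary : Matrix (Fin m) (Fin m) ℝ)
  set σ := Tuple.sort hS.eigenvalues
  have hU := Matrix.mem_unitaryGroup_iff'.mp hS.eigenvectorUnitary.2
  have hU' := Matrix.mem_unitaryGroup_iff.mp hS.eigenvectorUnitary.2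
  rw [star_eq_conjTranspose, conjTranspose_eq_transpose_of_trivial] at hU hU'
  have hspec : S = U * diagonal hS.eigenvalues * Uᵀ := by
    conv_lhs => rw [hS.spectral_theorem]
    simp [Unitary.conjStarAlgAut_apply, U, star_eq_conjTranspose,
      conjTranspose_eq_transpose_of_trivial]
  refine ⟨U.submatrix id σ, ?_, ?_, ?_⟩
  · rw [transpose_submatrix, ← submatrix_mul _ _ _ _ _ Function.bijective_id, hU]
    simp
  · rw [transpose_submatrix, submatrix_mul_equiv _ _ _ σ, hU']
    simp
  · rw [sortedEigenvalues, ← submatrix_diagonal_equiv, transpose_submatrix,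
      submatrix_mul_equiv _ _ _ σ, submatrix_mul_equiv _ _ _ σ, submatrix_id_id]
    exact hspec

end Matrix.IsHermitian

lemma sum_filter_lt_le_sum_mul {m t : ℕ} {ν s : Fin m → ℝ} (hν : Monotone ν)
    (hs0 : ∀ i, 0 ≤ s i) (hs1 : ∀ i, s i ≤ 1) (hsum : ∑ i, s i = t) :
    ∑ i ∈ {i : Fin m | (i : ℕ) < t}, ν i ≤ ∑ i, ν i * s i := by
  have htm : t ≤ m := by
    have := Finset.sum_le_sum fun i (_ : i ∈ Finset.univ) => hs1 i
    simp only [hsum, Finset.sum_const, Finset.card_univ, Fintype.card_fin, nsmul_eq_mul,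
      mul_one] at this
    exact_mod_cast this
  obtain _ | m := m
  · simp
  set χ : Fin (m + 1) → ℝ := fun i => if (i : ℕ) < t then 1 else 0
  have hχ : ∑ i, χ i = t := by
    simp [χ, Finset.sum_boole, Fin.card_filter_val_lt, htm]
  -- threshold separating the `t` smallest values from the others
  set θ := ν ⟨t - 1, by omega⟩
  have hterm : ∀ i, (ν i - θ) * (χ i - s i) ≤ 0 := by
    intro i
    by_cases hi : (i : ℕ) < t
    · have : ν i ≤ θ := hν (Fin.mk_le_mk.2 (by omega))
      have := hs1 i
      simp only [χ, if_pos hi]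
      nlinarith
    · have : θ ≤ ν i := hν (Fin.mk_le_mk.2 (by omega))
      have := hs0 i
      simp only [χ, if_neg hi]
      nlinarith
  have key : ∑ i, (ν i - θ) * (χ i - s i) = ∑ i, ν i * χ i - ∑ i, ν i * s i := by
    simp only [sub_mul, mul_sub, Finset.sum_sub_distrib, ← Finset.mul_sum, hχ, hsum]
    ring
  have hlhs : ∑ i ∈ {i : Fin (m + 1) | (i : ℕ) < t}, ν i = ∑ i, ν i * χ i := by
    simp [Finset.sum_filter, χ]
  linarith [Finset.sum_nonpos fun i (_ : i ∈ Finset.univ) => hterm i]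

lemma diag_mem_Icc_of_idempotent {m : ℕ} {Q : Matrix (Fin m) (Fin m) ℝ} (hsym : Qᵀ = Q)
    (hidem : Q * Q = Q) (j : Fin m) : Q j j ∈ Set.Icc 0 1 := by
  have hsq : Q j j = ∑ l, (Q j l) ^ 2 := by
    conv_lhs => rw [← hidem, mul_apply]
    refine Finset.sum_congr rfl fun l _ => ?_
    rw [sq, ← transpose_apply Q l j, hsym]
  have hle : Q j j ^ 2 ≤ ∑ l, Q j l ^ 2 :=
    Finset.single_le_sum (fun l _ => sq_nonneg (Q j l)) (Finset.mem_univ j)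
  have hnn : 0 ≤ Q j j := by
    rw [hsq]; exact Finset.sum_nonneg fun l _ => sq_nonneg _
  exact ⟨hnn, by nlinarith⟩

lemma Matrix.IsHermitian.sum_sortedEigenvalues_le_trace {m t : ℕ} {S : Matrix (Fin m) (Fin m) ℝ}
    (hS : S.IsHermitian) {W : Matrix (Fin m) (Fin t) ℝ} (hW : Wᵀ * W = 1) :
    ∑ i ∈ {i : Fin m | (i : ℕ) < t}, hS.sortedEigenvalues i ≤ (Wᵀ * S * W).trace := by
  obtain ⟨V, hV, hV', hSV⟩ := hS.exists_orthogonal_diagonalization_sorted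
  -- `Q` is a projection of rank `t`, so its diagonal entries are weights in `[0, 1]` summing to `t`
  set Q := Vᵀ * W * (Vᵀ * W)ᵀ
  have hQsym : Qᵀ = Q := by simp [Q, Matrix.mul_assoc]
  have hQidem : Q * Q = Q := by
    simp only [Q, transpose_mul, transpose_transpose, Matrix.mul_assoc]
    rw [← Matrix.mul_assoc V Vᵀ, hV', Matrix.one_mul, ← Matrix.mul_assoc Wᵀ W, hW, Matrix.one_mul]
  have htrace : (Wᵀ * S * W).trace = ∑ i, hS.sortedEigenvalues i * Q i i := by
    conv_lhs => rw [hSV]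
    rw [Matrix.mul_assoc, Matrix.mul_assoc, ← Matrix.mul_assoc Wᵀ, ← Matrix.mul_assoc Wᵀ,
      trace_mul_comm]
    simp only [Q, transpose_mul, transpose_transpose, ← Matrix.mul_assoc]
    simp [trace, mul_diagonal, mul_comm]
  have hQtr : ∑ i, Q i i = t := by
    change Q.trace = t
    rw [trace_mul_comm, transpose_mul, transpose_transpose]
    simp only [Matrix.mul_assoc]
    rw [← Matrix.mul_assoc V, hV', Matrix.one_mul, hW, trace_one, Fintype.card_fin]
  rw [htrace]
  exact sum_filter_lt_le_sum_mul hS.monotone_sortedEigenvalues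
    (fun i => (diag_mem_Icc_of_idempotent hQsym hQidem i).1)
    (fun i => (diag_mem_Icc_of_idempotent hQsym hQidem i).2) hQtr

lemma exists_isometry_mul_eq_zero {n m t : ℕ} (C : Matrix (Fin n) (Fin m) ℝ)
    (ht : t + C.rank ≤ m) : ∃ W : Matrix (Fin m) (Fin t) ℝ, Wᵀ * W = 1 ∧ C * W = 0 := by
  set K : Submodule ℝ (EuclideanSpace ℝ (Fin m)) :=
    (LinearMap.ker C.mulVecLin).map (WithLp.linearEquiv 2 ℝ (Fin m → ℝ)).symm.toLinearMap
  have hK : t ≤ finrank ℝ K := by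
    have hnull := LinearMap.finrank_range_add_finrank_ker C.mulVecLin
    rw [finrank_fintype_fun_eq_card, Fintype.card_fin] at hnull
    have : finrank ℝ K = finrank ℝ (LinearMap.ker C.mulVecLin) := LinearEquiv.finrank_map_eq _ _
    rw [Matrix.rank] at ht
    omega
  set w : Fin t → EuclideanSpace ℝ (Fin m) := fun j => stdOrthonormalBasis ℝ K (Fin.castLE hK j)
  have hw : Orthonormal ℝ w :=
    ((stdOrthonormalBasis ℝ K).orthonormal.comp _ (Fin.castLE_injective hK)).comp_linearIsometry
      K.subtypeₗᵢ
  refine ⟨Matrix.of fun i j => w j i, ?_, ?_⟩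
  · ext j l
    rw [one_apply, ← orthonormal_iff_ite.mp hw j l]
    simp only [mul_apply, transpose_apply, of_apply, PiLp.inner_apply, RCLike.inner_apply,
      conj_trivial]
    exact Finset.sum_congr rfl fun _ _ => mul_comm _ _
  · ext i j
    have : C *ᵥ (w j).ofLp = 0 :=
      (Submodule.mem_map_equiv _).mp (stdOrthonormalBasis ℝ K (Fin.castLE hK j)).2
    simpa [mul_apply, mulVec, dotProduct] using congrFun this i

section EckartYoung

variable {n m : ℕ}

lemma isHermitian_transpose_mul_self (M : Matrix (Fin n) (Fin m) ℝ) : (Mᵀ * M).IsHermitian := by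
  simpa [conjTranspose_eq_transpose_of_trivial] using isHermitian_conjTranspose_mul_self M

lemma sum_sortedEigenvalues_le_frob2_sub (M C : Matrix (Fin n) (Fin m) ℝ) {k : ℕ}
    (hC : C.rank ≤ k) :
    ∑ i ∈ {i : Fin m | (i : ℕ) < m - k}, (isHermitian_transpose_mul_self M).sortedEigenvalues i ≤
      frob2 (M - C) := by
  have hCm : C.rank ≤ m := by simpa using C.rank_le_card_width
  obtain ⟨W, hW, hCW⟩ := exists_isometry_mul_eq_zero C (t := m - k) (by omega)
  calc _ ≤ (Wᵀ * (Mᵀ * M) * W).trace :=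
        (isHermitian_transpose_mul_self M).sum_sortedEigenvalues_le_trace hW
    _ = frob2 (M * W) := by simp [frob2_eq_trace, transpose_mul, Matrix.mul_assoc]
    _ = frob2 ((M - C) * W) := by rw [Matrix.sub_mul, hCW, sub_zero]
    _ ≤ frob2 (M - C) := frob2_mul_le_of_isometry _ hW

lemma exists_rank_le_frob2_sub_eq (M : Matrix (Fin n) (Fin m) ℝ) (k : ℕ) :
    ∃ B : Matrix (Fin n) (Fin m) ℝ, B.rank ≤ k ∧ frob2 (M - B) =
      ∑ i ∈ {i : Fin m | (i : ℕ) < m - k},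
        (isHermitian_transpose_mul_self M).sortedEigenvalues i := by
  obtain ⟨V, hV, hV', hMV⟩ :=
    (isHermitian_transpose_mul_self M).exists_orthogonal_diagonalization_sorted
  set ν := (isHermitian_transpose_mul_self M).sortedEigenvalues
  -- `B` keeps the components of `M` along the eigenvectors of the `k` largest eigenvalues
  set e : Fin m → ℝ := fun i => if (i : ℕ) < m - k then 0 else 1
  refine ⟨M * (V * diagonal e * Vᵀ), ?_, ?_⟩
  · have hcard : Fintype.card {i // e i ≠ 0} ≤ k := by
      have hsplit := Finset.card_filter_add_card_filter_not (s := Finset.univ)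
        (fun i : Fin m => (i : ℕ) < m - k)
      rw [Fin.card_filter_val_lt, Finset.card_univ, Fintype.card_fin] at hsplit
      rw [Fintype.card_subtype]
      simp only [e, ne_eq, ite_eq_left_iff, one_ne_zero, imp_false, not_not]
      omega
    calc (M * (V * diagonal e * Vᵀ)).rank ≤ (V * diagonal e * Vᵀ).rank := rank_mul_le_right _ _
      _ ≤ (V * diagonal e).rank := rank_mul_le_left _ _
      _ ≤ (diagonal e).rank := rank_mul_le_right _ _
      _ ≤ k := by rw [rank_diagonal]; exact hcard
  · have hcancel : ∀ X : Matrix (Fin m) (Fin m) ℝ, Vᵀ * (V * X) = X := fun X => by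
      rw [← Matrix.mul_assoc, hV, Matrix.one_mul]
    have hres : M - M * (V * diagonal e * Vᵀ) = M * (V * diagonal (1 - e) * Vᵀ) := by
      rw [show diagonal (1 - e) = 1 - diagonal e from (diagonal_sub 1 e).symm, Matrix.mul_sub,
        Matrix.sub_mul, Matrix.mul_one, hV', Matrix.mul_sub, Matrix.mul_one]
    have hgram : (M * (V * diagonal (1 - e) * Vᵀ))ᵀ * (M * (V * diagonal (1 - e) * Vᵀ)) =
        V * (diagonal (1 - e) * diagonal ν * diagonal (1 - e)) * Vᵀ := by
      rw [transpose_mul, Matrix.mul_assoc, ← Matrix.mul_assoc Mᵀ, hMV]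
      simp only [transpose_mul, transpose_transpose, diagonal_transpose, Matrix.mul_assoc, hcancel]
    rw [hres, frob2_eq_trace, hgram, trace_mul_comm, ← Matrix.mul_assoc, hV, Matrix.one_mul,
      diagonal_mul_diagonal, diagonal_mul_diagonal, trace_diagonal, Finset.sum_filter]
    refine Finset.sum_congr rfl fun i _ => ?_
    by_cases hi : (i : ℕ) < m - k <;> simp [e, hi]

lemma frob2_eq_sum_sortedEigenvalues (M : Matrix (Fin n) (Fin m) ℝ) :
    frob2 M = ∑ i, (isHermitian_transpose_mul_self M).sortedEigenvalues i := by
  rw [frob2_eq_trace, (isHermitian_transpose_mul_self M).trace_eq_sum_eigenvalues]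
  exact (Equiv.sum_comp _ _).symm

lemma trunc_spec (M : Matrix (Fin n) (Fin m) ℝ) {k : ℕ} (hk : k ≠ 0) :
    (trunc M k).rank ≤ k ∧
      ∀ C : Matrix (Fin n) (Fin m) ℝ, C.rank ≤ k → frob2 (M - trunc M k) ≤ frob2 (M - C) := by
  rw [trunc, if_neg hk]
  obtain ⟨B, hB, hMB⟩ := exists_rank_le_frob2_sub_eq M k
  exact Classical.epsilon_spec (p := fun B : Matrix (Fin n) (Fin m) ℝ =>
    B.rank ≤ k ∧ ∀ C : Matrix (Fin n) (Fin m) ℝ, C.rank ≤ k → frob2 (M - B) ≤ frob2 (M - C))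
    ⟨B, hB, fun C hC => hMB ▸ sum_sortedEigenvalues_le_frob2_sub M C hC⟩

lemma frob2_sub_trunc_eq_sum_sortedEigenvalues (M : Matrix (Fin n) (Fin m) ℝ) (k : ℕ) :
    frob2 (M - trunc M k) = ∑ i ∈ {i : Fin m | (i : ℕ) < m - k},
      (isHermitian_transpose_mul_self M).sortedEigenvalues i := by
  rcases eq_or_ne k 0 with rfl | hk
  · simp [trunc, frob2_eq_sum_sortedEigenvalues]
  obtain ⟨B, hB, hMB⟩ := exists_rank_le_frob2_sub_eq M k
  exact le_antisymm (hMB ▸ (trunc_spec M hk).2 B hB)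
    (sum_sortedEigenvalues_le_frob2_sub M _ (trunc_spec M hk).1)

lemma sq_sval (M : Matrix (Fin n) (Fin m) ℝ) {k : ℕ} (hk : k ∈ Finset.Icc 1 m) :
    sval M k ^ 2 = (isHermitian_transpose_mul_self M).sortedEigenvalues ⟨m - k, by grind⟩ := by
  rw [sval, dif_pos (Finset.mem_Icc.mp hk)]
  exact Real.sq_sqrt ((posSemidef_conjTranspose_mul_self M).eigenvalues_nonneg _)

lemma frob2_sub_trunc (M : Matrix (Fin n) (Fin m) ℝ) (k : ℕ) :
    frob2 (M - trunc M k) = ∑ j ∈ Finset.Ioc k m, sval M j ^ 2 := by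
  rw [frob2_sub_trunc_eq_sum_sortedEigenvalues]
  symm
  refine Finset.sum_bij' (fun j hj => ⟨m - j, by grind⟩) (fun i _ => m - i) ?_ ?_ ?_ ?_ ?_
  · grind
  · grind
  · grind
  · intro i _; ext; grind
  · intro j hj; exact sq_sval M (by grind)

lemma sq_sval_succ_le (M : Matrix (Fin n) (Fin m) ℝ) {k : ℕ} (hk : 1 ≤ k) :
    sval M (k + 1) ^ 2 ≤ sval M k ^ 2 := by
  by_cases hkm : k + 1 ≤ m
  · rw [sq_sval M (Finset.mem_Icc.2 ⟨by omega, hkm⟩), sq_sval M (Finset.mem_Icc.2 ⟨hk, by omega⟩)]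
    exact (isHermitian_transpose_mul_self M).monotone_sortedEigenvalues (Fin.mk_le_mk.2 (by omega))
  · rw [show sval M (k + 1) = 0 from dif_neg (by omega), zero_pow two_ne_zero]
    positivity

end EckartYoung

section Projection

variable {n m : ℕ} {P : Matrix (Fin n) (Fin n) ℝ}

lemma frob2_eq_add_of_projection (hP2 : P * P = P) (hPt : Pᵀ = P) (Z : Matrix (Fin n) (Fin m) ℝ) :
    frob2 Z = frob2 (P * Z) + frob2 (Z - P * Z) := by
  conv_lhs => rw [← add_sub_cancel (P * Z) Z]
  refine frob2_add_of_trace_eq_zero ?_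
  rw [transpose_mul, hPt, Matrix.mul_assoc, Matrix.mul_sub, ← Matrix.mul_assoc P P, hP2, sub_self,
    Matrix.mul_zero, trace_zero]

lemma frob2_sub_eq_add_of_mul_eq (hP2 : P * P = P) (hPt : Pᵀ = P) (Y : Matrix (Fin n) (Fin m) ℝ)
    {B : Matrix (Fin n) (Fin m) ℝ} (hB : P * B = B) :
    frob2 (Y - B) = frob2 (Y - P * Y) + frob2 (P * Y - B) := by
  rw [frob2_eq_add_of_projection hP2 hPt (Y - B), Matrix.mul_sub, hB, sub_sub_sub_cancel_right,
    add_comm]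

lemma mul_trunc_eq_of_mul_eq (hP2 : P * P = P) (hPt : Pᵀ = P) {M : Matrix (Fin n) (Fin m) ℝ}
    (hM : P * M = M) (k : ℕ) : P * trunc M k = trunc M k := by
  rcases eq_or_ne k 0 with rfl | hk
  · simp [trunc]
  obtain ⟨hrank, hmin⟩ := trunc_spec M hk
  have hsplit := frob2_eq_add_of_projection hP2 hPt (M - trunc M k)
  rw [Matrix.mul_sub, hM, sub_sub_sub_cancel_left] at hsplit
  have hle := hmin _ ((rank_mul_le_right P _).trans hrank)
  have : frob2 (P * trunc M k - trunc M k) = 0 :=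
    le_antisymm (by linarith) (frob2_nonneg _)
  exact sub_eq_zero.mp (frob2_eq_zero_iff.mp this)

lemma frob2_sub_trunc_mul (hP2 : P * P = P) (hPt : Pᵀ = P) (Y : Matrix (Fin n) (Fin m) ℝ) (k : ℕ) :
    frob2 (Y - trunc (P * Y) k) = frob2 (Y - P * Y) + ∑ j ∈ Finset.Ioc k m, sval (P * Y) j ^ 2 := by
  have hPY : P * (P * Y) = P * Y := by rw [← Matrix.mul_assoc, hP2]
  rw [frob2_sub_eq_add_of_mul_eq hP2 hPt Y (mul_trunc_eq_of_mul_eq hP2 hPt hPY k), frob2_sub_trunc]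

lemma frob2_sub_trunc_mul_eq_succ (hP2 : P * P = P) (hPt : Pᵀ = P) (Y : Matrix (Fin n) (Fin m) ℝ)
    {k : ℕ} (hk : k < m) :
    frob2 (Y - trunc (P * Y) k) = frob2 (Y - trunc (P * Y) (k + 1)) + sval (P * Y) (k + 1) ^ 2 := by
  rw [frob2_sub_trunc_mul hP2 hPt, frob2_sub_trunc_mul hP2 hPt, ← Finset.Icc_add_one_left_eq_Ioc,
    ← Finset.Ioc_insert_left hk, Finset.sum_insert (by simp)]
  ring

end Projection

section Prefix

variable {c : ℕ → Prop} {K : ℕ}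

def prefixLength (c : ℕ → Prop) (K : ℕ) : ℕ :=
  sSup {k | k ≤ K ∧ ∀ j, 1 ≤ j → j ≤ k → c j}

lemma prefixLength_mem : prefixLength c K ≤ K ∧ ∀ j, 1 ≤ j → j ≤ prefixLength c K → c j :=
  Nat.sSup_mem (s := {k | k ≤ K ∧ ∀ j, 1 ≤ j → j ≤ k → c j})
    ⟨0, by simp, fun j hj hj0 => by omega⟩ ⟨K, fun _ hk => hk.1⟩

lemma le_prefixLength_iff (hc : AntitoneOn c (Set.Icc 1 K)) {j : ℕ} (hj : j ∈ Set.Icc 1 K) :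
    j ≤ prefixLength c K ↔ c j := by
  refine ⟨fun h => prefixLength_mem.2 j hj.1 h, fun h => le_csSup ⟨K, fun _ hk => hk.1⟩ ?_⟩
  exact ⟨hj.2, fun i hi hij => hc ⟨hi, hij.trans hj.2⟩ hj hij h⟩

lemma card_filter_Icc_eq_prefixLength [DecidablePred c] (hc : AntitoneOn c (Set.Icc 1 K)) :
    {j ∈ Finset.Icc 1 K | c j}.card = prefixLength c K := by
  have : {j ∈ Finset.Icc 1 K | c j} = Finset.Icc 1 (prefixLength c K) := by
    ext j
    simp only [Finset.mem_filter, Finset.mem_Icc]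
    constructor
    · rintro ⟨hj, hcj⟩
      exact ⟨hj.1, (le_prefixLength_iff hc hj).2 hcj⟩
    · rintro ⟨hj1, hj⟩
      have hjK : j ≤ K := hj.trans prefixLength_mem.1
      exact ⟨⟨hj1, hjK⟩, (le_prefixLength_iff hc ⟨hj1, hjK⟩).1 hj⟩
  simp [this]

end Prefix

lemma div_le_add_div_add_iff {a d D l : ℝ} (hD : 0 < D) (hl : 0 < l) :
    a / D ≤ (a + d) / (D + l) ↔ l * (a / D) ≤ d := by
  rw [div_le_div_iff₀ hD (by positivity), mul_div_assoc', div_le_iff₀ hD]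
  constructor <;> intro h <;> linarith

lemma mul_add_div_add_le {a d d' D l : ℝ} (hD : 0 < D) (hl : 0 < l) (h : l * (a / D) ≤ d)
    (hd : d ≤ d') : l * ((a + d) / (D + l)) ≤ d' := by
  rw [mul_div_assoc', div_le_iff₀ hD] at h
  rw [mul_div_assoc', div_le_iff₀ (by positivity)]
  nlinarith

section RankSelection

variable {n m q : ℕ} {Y : Matrix (Fin n) (Fin m) ℝ} {P : Matrix (Fin n) (Fin n) ℝ} {lam : ℝ}

lemma lam_mul_lt_of_le_Kfun (hlam : 0 < lam) {k : ℕ} (hk0 : k ≠ 0) (hk : k ≤ Kfun n m q lam) :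
    lam * k < ((n * m : ℕ) : ℝ) := by
  have hfloor := (Nat.le_floor_iff' hk0).1 (hk.trans ((min_le_left _ _).trans (min_le_left _ _)))
  rw [le_div_iff₀ hlam] at hfloor
  linarith

lemma sighat2_eq_succ (hP2 : P * P = P) (hPt : Pᵀ = P) {k : ℕ} (hk : k < m) :
    sighat2 Y P lam k = (frob2 (Y - trunc (P * Y) (k + 1)) + sval (P * Y) (k + 1) ^ 2) /
      ((((n * m : ℕ) : ℝ) - lam * ((k + 1 : ℕ) : ℝ)) + lam) := by
  rw [sighat2, frob2_sub_trunc_mul_eq_succ hP2 hPt Y hk]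
  congr 1
  push_cast
  ring

lemma sighat2_succ_le_iff (hP2 : P * P = P) (hPt : Pᵀ = P) (hlam : 0 < lam) {k : ℕ}
    (hk : k < Kfun n m q lam) :
    sighat2 Y P lam (k + 1) ≤ sighat2 Y P lam k ↔
      lam * sighat2 Y P lam (k + 1) ≤ sval (P * Y) (k + 1) ^ 2 := by
  rw [sighat2_eq_succ hP2 hPt (hk.trans_le (min_le_right _ _))]
  exact div_le_add_div_add_iff (sub_pos.2 (lam_mul_lt_of_le_Kfun hlam k.succ_ne_zero hk)) hlam

lemma antitoneOn_selection_criterion (hP2 : P * P = P) (hPt : Pᵀ = P) (hlam : 0 < lam) :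
    AntitoneOn (fun j => lam * sighat2 Y P lam j ≤ sval (P * Y) j ^ 2)
      (Set.Icc 1 (Kfun n m q lam)) := by
  refine antitoneOn_of_succ_le Set.ordConnected_Icc fun j _ hj hj1 h => ?_
  rw [Order.succ_eq_add_one] at hj1 h
  rw [sighat2_eq_succ hP2 hPt (hj1.2.trans_lt' (by omega) |>.trans_le (min_le_right _ _))]
  exact mul_add_div_add_le (sub_pos.2 (lam_mul_lt_of_le_Kfun hlam j.succ_ne_zero hj1.2)) hlam h
    (sq_sval_succ_le _ hj.1)

lemma khat_eq_prefixLength (hP2 : P * P = P) (hPt : Pᵀ = P) (hlam : 0 < lam) :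
    khat Y P q lam =
      prefixLength (fun j => lam * sighat2 Y P lam j ≤ sval (P * Y) j ^ 2) (Kfun n m q lam) := by
  rw [khat, ← Finset.card_filter]
  exact card_filter_Icc_eq_prefixLength (antitoneOn_selection_criterion hP2 hPt hlam)

lemma khat_le_Kfun : khat Y P q lam ≤ Kfun n m q lam := by
  rw [khat, ← Finset.card_filter]
  exact (Finset.card_filter_le _ _).trans (by simp)

lemma le_khat_iff (hP2 : P * P = P) (hPt : Pᵀ = P) (hlam : 0 < lam) {j : ℕ}
    (hj : j ∈ Set.Icc 1 (Kfun n m q lam)) :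
    j ≤ khat Y P q lam ↔ lam * sighat2 Y P lam j ≤ sval (P * Y) j ^ 2 := by
  rw [khat_eq_prefixLength hP2 hPt hlam]
  exact le_prefixLength_iff (antitoneOn_selection_criterion hP2 hPt hlam) hj

lemma antitoneOn_sighat2 (hP2 : P * P = P) (hPt : Pᵀ = P) (hlam : 0 < lam) :
    AntitoneOn (sighat2 Y P lam) (Set.Icc 0 (khat Y P q lam)) := by
  refine antitoneOn_of_succ_le Set.ordConnected_Icc fun k _ _ hk => ?_
  simp only [Order.succ_eq_add_one, Set.mem_Icc] at hk ⊢
  have hkK : k + 1 ≤ Kfun n m q lam := hk.2.trans khat_le_Kfun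
  exact (sighat2_succ_le_iff hP2 hPt hlam hkK).2 ((le_khat_iff hP2 hPt hlam ⟨by omega, hkK⟩).1 hk.2)

lemma monotoneOn_sighat2 (hP2 : P * P = P) (hPt : Pᵀ = P) (hlam : 0 < lam) :
    MonotoneOn (sighat2 Y P lam) (Set.Icc (khat Y P q lam) (Kfun n m q lam)) := by
  refine monotoneOn_of_le_succ Set.ordConnected_Icc fun k _ hk hk1 => ?_
  simp only [Order.succ_eq_add_one, Set.mem_Icc] at hk hk1 ⊢
  refine (lt_of_not_ge fun h => ?_).le
  have := (le_khat_iff hP2 hPt hlam ⟨by omega, hk1.2⟩).2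
    ((sighat2_succ_le_iff hP2 hPt hlam hk1.2).1 h)
  omega

end RankSelection

theorem statement_2_general
    {n m q : ℕ}
    (Y : Matrix (Fin n) (Fin m) ℝ)
    (P : Matrix (Fin n) (Fin n) ℝ)
    (hP2 : P * P = P) (hPt : P.transpose = P)
    (lam : ℝ) (hlam : 0 < lam)
    :
    khat Y P q lam = sSup {k : ℕ | k ≤ Kfun n m q lam ∧
        ∀ j, 1 ≤ j → j ≤ k → lam * sighat2 Y P lam j ≤ (sval (P * Y) j) ^ 2} ∧
    (∀ k ≤ Kfun n m q lam, sighat2 Y P lam (khat Y P q lam) ≤ sighat2 Y P lam k) ∧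
    (∀ k₁ k₂ : ℕ, k₁ ≤ k₂ → k₂ ≤ khat Y P q lam →
      sighat2 Y P lam k₂ ≤ sighat2 Y P lam k₁) ∧
    (∀ k₁ k₂ : ℕ, khat Y P q lam ≤ k₁ → k₁ ≤ k₂ → k₂ ≤ Kfun n m q lam →
      sighat2 Y P lam k₁ ≤ sighat2 Y P lam k₂) := by
  have hdown := antitoneOn_sighat2 (Y := Y) (q := q) hP2 hPt hlam
  have hup := monotoneOn_sighat2 (Y := Y) (q := q) hP2 hPt hlam
  have hkK := khat_le_Kfun (Y := Y) (P := P) (q := q) (lam := lam)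
  refine ⟨khat_eq_prefixLength hP2 hPt hlam, fun k hk => ?_,
    fun k₁ k₂ h12 h2 => hdown ⟨by omega, by omega⟩ ⟨by omega, h2⟩ h12,
    fun k₁ k₂ h1 h12 h2 => hup ⟨h1, by omega⟩ ⟨by omega, h2⟩ h12⟩
  rcases le_total k (khat Y P q lam) with h | h
  · exact hdown ⟨by omega, h⟩ ⟨by omega, le_rfl⟩ h
  · exact hup ⟨le_rfl, hkK⟩ ⟨h, hk⟩ h

theorem statement_2
    {n m p q : ℕ}
    (X : Matrix (Fin n) (Fin p) ℝ) (A : Matrix (Fin p) (Fin m) ℝ)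
    (E Y : Matrix (Fin n) (Fin m) ℝ)
    (P : Matrix (Fin n) (Fin n) ℝ)
    (hY : Y = X * A + E)
    (hP2 : P * P = P) (hPt : P.transpose = P) (hPX : P * X = X)
    (hq : X.rank = q) (hPq : P.rank = q)
    (lam : ℝ) (hlam : 0 < lam)
    :
    khat Y P q lam = sSup {k : ℕ | k ≤ Kfun n m q lam ∧
        ∀ j, 1 ≤ j → j ≤ k → lam * sighat2 Y P lam j ≤ (sval (P * Y) j) ^ 2} ∧
    (∀ k ≤ Kfun n m q lam, sighat2 Y P lam (khat Y P q lam) ≤ sighat2 Y P lam k) ∧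
    (∀ k₁ k₂ : ℕ, k₁ ≤ k₂ → k₂ ≤ khat Y P q lam →
      sighat2 Y P lam k₂ ≤ sighat2 Y P lam k₁) ∧
    (∀ k₁ k₂ : ℕ, khat Y P q lam ≤ k₁ → k₁ ≤ k₂ → k₂ ≤ Kfun n m q lam →
      sighat2 Y P lam k₁ ≤ sighat2 Y P lam k₂) :=
  statement_2_general Y P hP2 hPt lam hlam

end
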